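/- Let s,ℓ,c be positive integers with c+ℓ=s and n=3s-ℓ=2ℓ+3c. Let F ⊆ 2^[n] be a shifted up-set containing no 1-element sets, and let d(F) = d with d ≤ 2c. Then either |2^[n] \ P'(s,ℓ)| − (y_F(0)+y_F(1)+y_F(2)) ≤ (4ℓ+d−3)d/2, or |2^[n] \ P(s,ℓ)| − (y_F(0)+y_F(1)+y_F(2)) ≤ (2ℓ+6c−⌈d/2⌉+1)⌈d/2⌉/2. -/

import Mathlib

open Finset

/-- The ground set `[n] = {1, 2, …, n}`. -/
def ground (n : ℕ) : Finset ℕ := Finset.Icc 1 n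

-- The matching number `ν(F)` of a family: the size of the largest pairwise
-- disjoint subfamily of `F`.
open Classical in
noncomputable def matchingNumber (F : Finset (Finset ℕ)) : ℕ :=
  (F.powerset.filter fun M : Finset (Finset ℕ) =>
      (M : Set (Finset ℕ)).Pairwise fun A B => Disjoint A B).sup Finset.card

-- `e(n, s)`: the maximum size of a family `F ⊆ 2^[n]` with `ν(F) < s`.
open Classical in
noncomputable def extremalNumber (n s : ℕ) : ℕ :=
  (((ground n).powerset.powerset).filter fun F => matchingNumber F < s).sup Finset.card

/-- The family `P(s, ℓ) = {P ⊆ [n] : |P| + |P ∩ [ℓ-1]| ≥ 3}` (it depends only on `n, ℓ`). -/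
def famP (n l : ℕ) : Finset (Finset ℕ) :=
  (ground n).powerset.filter fun A => 3 ≤ A.card + (A ∩ Finset.Icc 1 (l - 1)).card

/-- The family `P'(s, ℓ)`: all subsets of `[n]` of size at least `3` together with
all `2`-element subsets of `[2ℓ-1]`. -/
def famP' (n l : ℕ) : Finset (Finset ℕ) :=
  ((ground n).powerset.filter fun A => 3 ≤ A.card) ∪
    (Finset.Icc 1 (2 * l - 1)).powersetCard 2

/-- The family `Q(s, ℓ)`: all subsets of `[n]` of size at least `3` together with all
`2`-element subsets of `[s+ℓ-1]`, with all `3`-element subsets of `[s+ℓ, n]` removed. -/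
def famQ (n s l : ℕ) : Finset (Finset ℕ) :=
  (((ground n).powerset.filter fun A => 3 ≤ A.card) ∪
      (Finset.Icc 1 (s + l - 1)).powersetCard 2) \
    (Finset.Icc (s + l) n).powersetCard 3

/-- The family `W(s, ℓ) = {P ⊆ [n] : |P ∩ [2s-1]| ≥ 2}`. -/
def famW (n s : ℕ) : Finset (Finset ℕ) :=
  (ground n).powerset.filter fun A => 2 ≤ (A ∩ Finset.Icc 1 (2 * s - 1)).card

/-- The `(i ← j)`-shift of a set. -/
def shiftSet (i j : ℕ) (A : Finset ℕ) : Finset ℕ :=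
  if j ∈ A ∧ i ∉ A then insert i (A.erase j) else A

/-- The `(i ← j)`-shift of a family. -/
def shiftFam (i j : ℕ) (F : Finset (Finset ℕ)) : Finset (Finset ℕ) :=
  F.image (shiftSet i j) ∪ F.filter fun A => shiftSet i j A ∈ F

/-- A family `F ⊆ 2^[n]` is shifted if it is invariant under all `(i ← j)`-shifts
with `1 ≤ i < j ≤ n`. -/
def IsShifted (n : ℕ) (F : Finset (Finset ℕ)) : Prop :=
  ∀ i j : ℕ, 1 ≤ i → i < j → j ≤ n → shiftFam i j F = F

/-- `A` can be shifted to `B`: some sequence of `(a ← b)`-shifts with `a < b`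
transforms `A` into `B`. -/
def ShiftsTo (n : ℕ) (A B : Finset ℕ) : Prop :=
  Relation.ReflTransGen
    (fun X Y => ∃ a b : ℕ, 1 ≤ a ∧ a < b ∧ b ≤ n ∧ Y = shiftSet a b X) A B

/-- A family `F ⊆ 2^[n]` is an up-set if it is closed under supersets inside `[n]`. -/
def IsUpSet (n : ℕ) (F : Finset (Finset ℕ)) : Prop :=
  ∀ A ∈ F, ∀ B : Finset ℕ, A ⊆ B → B ⊆ ground n → B ∈ F

/-- The `k`-th layer of a family: its `k`-element members (as subsets of `[n]`). -/
def layer (n : ℕ) (F : Finset (Finset ℕ)) (k : ℕ) : Finset (Finset ℕ) :=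
  F ∩ (ground n).powersetCard k

/-- `y_F(k)`: the number of `k`-element subsets of `[n]` that do not belong to `F`. -/
def yF (n : ℕ) (F : Finset (Finset ℕ)) (k : ℕ) : ℕ :=
  Nat.choose n k - (layer n F k).card

/-- The defining condition for `d(F)` (with parameter `ℓ`). -/
def DCond (l : ℕ) (F : Finset (Finset ℕ)) (d : ℕ) : Prop :=
  (Even d ∧ ∃ i ∈ Finset.Icc 1 (l + d / 2), ({i, 2 * l + d + 1 - i} : Finset ℕ) ∉ F) ∨
  (Odd d ∧ (({1, 2 * l + d} : Finset ℕ) ∉ F ∨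
    ∃ i ∈ Finset.Icc 3 (l + (d + 1) / 2), ({i, 2 * l + d + 2 - i} : Finset ℕ) ∉ F))

/-- `d(F)`: the smallest `d ≥ 0` satisfying the condition `DCond ℓ F d`. -/
noncomputable def dF (l : ℕ) (F : Finset (Finset ℕ)) : ℕ := sInf {d : ℕ | DCond l F d}

/-! If `d = d(F)`, some pair `{i, t}` with `i + t = 2ℓ + d + 1` (or `2ℓ + d + 2`) is missing
from `F`.  By shiftedness every pair `{a < b}` of `F` then has `b < t` or `a < i`, so the
number `L` of pairs in `F` satisfies `2L ≤ (t - 1)(t - 2) + 2(i - 1)(n + 1 - t)`.  As `F` is an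
up-set without singletons, `y_F(0) + y_F(1) + y_F(2)` only depends on `L`, and the two
differences of the statement become linear in `L`.  The bound on `2L` is a convex quadratic in
`i`, so it is at most its value at an end of the admissible range of `i`: the left end gives the
estimate against `P'(s, ℓ)` and the right end `i = ℓ + ⌈d/2⌉` the one against `P(s, ℓ)`. -/

theorem two_mul_natCast_choose_two (m : ℕ) : (2 : ℤ) * m.choose 2 = m * (m - 1) := by
  have : ((2 * m.choose 2 : ℤ) : ℚ) = ((m * (m - 1) : ℤ) : ℚ) := by
    push_cast
    rw [Nat.cast_choose_two]
    ring
  exact_mod_cast this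

theorem le_max_of_quadratic {R : Type*} [CommRing R] [LinearOrder R] [IsStrictOrderedRing R]
    {f : R → R} {a b k : R} (hf : ∀ x, f x = a * x ^ 2 + b * x + k) (ha : 0 ≤ a)
    {lo x hi : R} (hlo : lo ≤ x) (hhi : x ≤ hi) : f x ≤ max (f lo) (f hi) := by
  by_contra! h
  obtain ⟨hflo, hfhi⟩ := max_lt_iff.mp h
  have hlo' : lo < x := hlo.lt_of_ne (by rintro rfl; exact hflo.false)
  have hhi' : x < hi := hhi.lt_of_ne (by rintro rfl; exact hfhi.false)
  rw [hf, hf] at hflo hfhi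
  -- `(hi - x)(f x - f lo) + (x - lo)(f x - f hi) = -a (x - lo)(hi - x)(hi - lo)`
  nlinarith [mul_pos (sub_pos.mpr hhi') (sub_pos.mpr hflo),
    mul_pos (sub_pos.mpr hlo') (sub_pos.mpr hfhi),
    mul_nonneg (mul_nonneg (sub_pos.mpr hlo').le (sub_pos.mpr hhi').le)
      (mul_nonneg ha (sub_pos.mpr (hlo'.trans hhi')).le)]

theorem shiftSet_pair {i j k : ℕ} (hij : i ≠ j) (hik : i ≠ k) (hjk : j ≠ k) :
    shiftSet i j {j, k} = {i, k} := by
  rw [shiftSet, if_pos ⟨mem_insert_self j {k}, by simp [hij, hik]⟩,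
    erase_insert (by simpa using hjk)]

namespace IsShifted

variable {n : ℕ} {F : Finset (Finset ℕ)}

theorem shiftSet_mem (hF : IsShifted n F) {i j : ℕ} (hi : 1 ≤ i) (hij : i < j) (hj : j ≤ n)
    {A : Finset ℕ} (hA : A ∈ F) : shiftSet i j A ∈ F := by
  rw [← hF i j hi hij hj]
  exact mem_union_left _ (mem_image_of_mem _ hA)

theorem pair_mem (hF : IsShifted n F) {i t a b : ℕ} (hi : 1 ≤ i) (hia : i ≤ a) (hab : a < b)
    (hit : i < t) (htb : t ≤ b) (hb : b ≤ n) (hA : {a, b} ∈ F) : {i, t} ∈ F := by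
  have hib : ({i, b} : Finset ℕ) ∈ F := by
    rcases hia.eq_or_lt with rfl | hia
    · exact hA
    · simpa [shiftSet_pair hia.ne (by omega) hab.ne] using
        hF.shiftSet_mem hi hia (hab.le.trans hb) hA
  rcases htb.eq_or_lt with rfl | htb
  · exact hib
  · have := hF.shiftSet_mem (by omega) htb hb (pair_comm i b ▸ hib)
    rwa [shiftSet_pair htb.ne hit.ne' (by omega), pair_comm] at this

theorem card_layer_two_le (hF : IsShifted n F) {i t : ℕ} (hi : 1 ≤ i) (hit : i < t)
    (hit' : {i, t} ∉ F) :
    #(layer n F 2) ≤ (t - 1).choose 2 + (i - 1) * (n + 1 - t) := by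
  have hsub : layer n F 2 ⊆ (Icc 1 (t - 1)).powersetCard 2 ∪
      (Icc 1 (i - 1) ×ˢ Icc t n).image fun p => {p.1, p.2} := by
    intro A hA
    simp only [layer, ground, mem_inter, mem_powersetCard] at hA
    obtain ⟨hAF, hAn, hA2⟩ := hA
    obtain ⟨a, b, hab, rfl⟩ := card_eq_two.mp hA2
    wlog hlt : a < b generalizing a b
    · rw [pair_comm] at hAF hAn ⊢
      exact this b a hab.symm hAF hAn (card_pair hab.symm) (by omega)
    have ha := hAn (mem_insert_self a {b})
    have hb := hAn (by simp : b ∈ ({a, b} : Finset ℕ))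
    rw [mem_Icc] at ha hb
    by_cases hbt : b < t
    · refine mem_union_left _ (mem_powersetCard.mpr ⟨?_, card_pair hab⟩)
      intro x hx
      rw [mem_Icc]
      simp only [mem_insert, mem_singleton] at hx
      omega
    · have hai : a < i := by
        by_contra hia
        exact hit' (hF.pair_mem hi (by omega) hlt hit (by omega) hb.2 hAF)
      exact mem_union_right _ (mem_image.mpr ⟨(a, b), by simp [mem_Icc]; omega, rfl⟩)
  calc #(layer n F 2) ≤ _ := card_le_card hsub
    _ ≤ _ := card_union_le _ _
    _ ≤ (t - 1).choose 2 + (i - 1) * (n + 1 - t) :=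
      add_le_add (by simp) (card_image_le.trans (by simp))

theorem two_mul_card_layer_two_le (hF : IsShifted n F) {i t : ℕ} (hi : 1 ≤ i) (hit : i < t)
    (htn : t ≤ n + 1) (hit' : {i, t} ∉ F) :
    2 * (#(layer n F 2) : ℤ) ≤ (t - 1) * (t - 2) + 2 * (i - 1) * (n + 1 - t) := by
  have h := hF.card_layer_two_le hi hit hit'
  have hc := two_mul_natCast_choose_two (t - 1)
  zify [hi, htn, hit.le.trans' hi] at h hc
  linarith

end IsShifted

theorem card_ground (n : ℕ) : #(ground n) = n := by
  simp [ground]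

theorem yF_eq_card_sdiff (n : ℕ) (G : Finset (Finset ℕ)) (k : ℕ) :
    yF n G k = #((ground n).powersetCard k \ G) := by
  rw [yF, layer, card_sdiff, card_powersetCard, card_ground]

theorem yF_add_card_layer (n : ℕ) (G : Finset (Finset ℕ)) (k : ℕ) :
    yF n G k + #(layer n G k) = n.choose k := by
  have := card_le_card (inter_subset_right : layer n G k ⊆ (ground n).powersetCard k)
  rw [card_powersetCard, card_ground] at this
  exact Nat.sub_add_cancel this

theorem yF_zero_add_yF_one {n : ℕ} {G : Finset (Finset ℕ)} (hG : ∀ A ∈ G, 2 ≤ #A) :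
    yF n G 0 + yF n G 1 = 1 + n := by
  have hdisj : ∀ k < 2, Disjoint ((ground n).powersetCard k) G := fun k hk =>
    disjoint_left.mpr fun A hA hAG => by
      have := hG A hAG
      rw [mem_powersetCard] at hA
      omega
  rw [yF_eq_card_sdiff, yF_eq_card_sdiff, sdiff_eq_self_of_disjoint (hdisj 0 (by norm_num)),
    sdiff_eq_self_of_disjoint (hdisj 1 (by norm_num)), card_powersetCard, card_powersetCard,
    card_ground, Nat.choose_zero_right, Nat.choose_one_right]

theorem IsUpSet.two_le_card {n : ℕ} {F : Finset (Finset ℕ)} (hF : IsUpSet n F)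
    (hF₁ : ∀ A ∈ F, #A ≠ 1) (hn : 1 ≤ n) {A : Finset ℕ} (hA : A ∈ F) : 2 ≤ #A := by
  have h₀ : ∅ ∉ F := fun h =>
    hF₁ _ (hF ∅ h {1} (empty_subset _) (by simp [ground]; omega)) (card_singleton 1)
  have : #A ≠ 0 := fun h => h₀ (card_eq_zero.mp h ▸ hA)
  have := hF₁ A hA
  omega

theorem card_powerset_sdiff {n : ℕ} {G : Finset (Finset ℕ)}
    (hG : ∀ A ⊆ ground n, 3 ≤ #A → A ∈ G) :
    #((ground n).powerset \ G) = yF n G 0 + yF n G 1 + yF n G 2 := by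
  have : (ground n).powerset \ G =
      (range 3).biUnion fun k => (ground n).powersetCard k \ G := by
    ext A
    simp only [mem_sdiff, mem_powerset, mem_biUnion, mem_range, mem_powersetCard]
    constructor
    · rintro ⟨hA, hAG⟩
      exact ⟨#A, by by_contra h; exact hAG (hG A hA (by omega)), ⟨hA, rfl⟩, hAG⟩
    · rintro ⟨k, -, ⟨hA, -⟩, hAG⟩
      exact ⟨hA, hAG⟩
  rw [this, card_biUnion, sum_range_succ, sum_range_succ, sum_range_one]
  · simp only [yF_eq_card_sdiff]
  · intro j _ k _ hjk
    exact disjoint_left.mpr fun A hj hk =>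
      hjk ((mem_powersetCard.mp (mem_sdiff.mp hj).1).2.symm.trans
        (mem_powersetCard.mp (mem_sdiff.mp hk).1).2)

section FamilyP

variable {n l : ℕ}

theorem mem_famP'_of_three_le {A : Finset ℕ} (hA : A ⊆ ground n) (h3 : 3 ≤ #A) :
    A ∈ famP' n l :=
  mem_union_left _ (mem_filter.mpr ⟨mem_powerset.mpr hA, h3⟩)

theorem two_le_card_of_mem_famP' {A : Finset ℕ} (hA : A ∈ famP' n l) : 2 ≤ #A := by
  simp only [famP', mem_union, mem_filter, mem_powersetCard] at hA
  omega

theorem yF_famP'_two_add_choose (hl : 2 * l - 1 ≤ n) :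
    yF n (famP' n l) 2 + (2 * l - 1).choose 2 = n.choose 2 := by
  have : layer n (famP' n l) 2 = (Icc 1 (2 * l - 1)).powersetCard 2 := by
    ext A
    simp only [layer, famP', ground, mem_inter, mem_union, mem_filter, mem_powerset,
      mem_powersetCard]
    constructor
    · rintro ⟨h | h, -, h2⟩ <;> [omega; exact h]
    · rintro ⟨hA, h2⟩
      exact ⟨Or.inr ⟨hA, h2⟩, hA.trans (Icc_subset_Icc_right hl), h2⟩
  rw [← yF_add_card_layer n _ 2, this, card_powersetCard, Nat.card_Icc, Nat.add_sub_cancel]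

theorem mem_famP_of_three_le {A : Finset ℕ} (hA : A ⊆ ground n) (h3 : 3 ≤ #A) :
    A ∈ famP n l :=
  mem_filter.mpr ⟨mem_powerset.mpr hA, by omega⟩

theorem two_le_card_of_mem_famP {A : Finset ℕ} (hA : A ∈ famP n l) : 2 ≤ #A := by
  have : #(A ∩ Icc 1 (l - 1)) ≤ #A := card_le_card inter_subset_left
  simp only [famP, mem_filter] at hA
  omega

theorem yF_famP_two (hl : 1 ≤ l) : yF n (famP n l) 2 = (n + 1 - l).choose 2 := by
  have : (ground n).powersetCard 2 \ famP n l = (Icc l n).powersetCard 2 := by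
    ext A
    simp only [famP, ground, mem_sdiff, mem_filter, mem_powerset, mem_powersetCard]
    constructor
    · rintro ⟨⟨hA, h2⟩, hA'⟩
      refine ⟨fun x hx => ?_, h2⟩
      have hxn := mem_Icc.mp (hA hx)
      by_contra hxl
      have : 0 < #(A ∩ Icc 1 (l - 1)) :=
        card_pos.mpr ⟨x, mem_inter.mpr ⟨hx, mem_Icc.mpr (by rw [mem_Icc] at hxl; omega)⟩⟩
      exact hA' ⟨hA, by omega⟩
    · rintro ⟨hA, h2⟩
      refine ⟨⟨hA.trans (Icc_subset_Icc_left hl), h2⟩, fun ⟨_, h3⟩ => ?_⟩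
      have : A ∩ Icc 1 (l - 1) = ∅ := disjoint_iff_inter_eq_empty.mp <|
        disjoint_left.mpr fun x hx hx' => by
          have := mem_Icc.mp (hA hx)
          rw [mem_Icc] at hx'
          omega
      rw [this, card_empty] at h3
      omega
  rw [yF_eq_card_sdiff, this, card_powersetCard, Nat.card_Icc]

end FamilyP

/-- The bound of `IsShifted.two_mul_card_layer_two_le` for the missing pair
`{i, 2ℓ + 2e + 1 - i}` when `n = 2ℓ + 3c`. -/
def layerBound (l c e i : ℤ) : ℤ :=
  (2 * l + 2 * e - i) * (2 * l + 2 * e - i - 1) + 2 * (i - 1) * (3 * c - 2 * e + i)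

theorem layerBound_le_max {l c e lo i : ℤ} (hlo : lo ≤ i) (hi : i ≤ l + e) :
    layerBound l c e i ≤ max (layerBound l c e lo) (layerBound l c e (l + e)) :=
  le_max_of_quadratic (a := 3) (b := 2 * (3 * c - 2 * e) - 2 * (2 * l + 2 * e) - 1)
    (k := (2 * l + 2 * e) * (2 * l + 2 * e - 1) - 2 * (3 * c - 2 * e))
    (fun x => by unfold layerBound; ring) (by norm_num) hlo hi

theorem layerBound_three_le {l c e : ℤ} (h3 : 3 ≤ l + e) :
    layerBound l c e 3 ≤ (2 * l + 2 * e - 2) * (2 * l + 2 * e - 3) ∨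
      layerBound l c e 3 ≤ layerBound l c e (l + e) := by
  by_cases h : layerBound l c e 3 ≤ (2 * l + 2 * e - 2) * (2 * l + 2 * e - 3)
  · exact Or.inl h
  · right
    unfold layerBound at h ⊢
    nlinarith [mul_nonneg (by linarith : (0 : ℤ) ≤ l + e - 3)
        (by linarith : (0 : ℤ) ≤ 6 * c - 2 * l - 6 * e + 8),
      mul_nonneg (by linarith : (0 : ℤ) ≤ l + e) (by linarith : (0 : ℤ) ≤ l + e - 3)]

theorem IsShifted.two_mul_card_layer_two_le_layerBound {n l c e i : ℕ}
    {F : Finset (Finset ℕ)} (hF : IsShifted n F) (hn : n = 2 * l + 3 * c) (hec : e ≤ c)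
    (hi : 1 ≤ i) (hie : i ≤ l + e) (hi' : {i, 2 * l + 2 * e + 1 - i} ∉ F) :
    2 * (#(layer n F 2) : ℤ) ≤ layerBound l c e i := by
  have := hF.two_mul_card_layer_two_le hi (by omega) (by omega) hi'
  rw [show ((2 * l + 2 * e + 1 - i : ℕ) : ℤ) = 2 * l + 2 * e + 1 - i by omega,
    show (n : ℤ) = 2 * l + 3 * c by exact_mod_cast hn] at this
  unfold layerBound
  linarith

-- The witness `2n + 2` is needed: on an empty set `sInf` would return the junk value `0`.
theorem dCond_dF {n l : ℕ} {F : Finset (Finset ℕ)} (hF : ∀ A ∈ F, A ⊆ ground n) :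
    DCond l F (dF l F) :=
  Nat.sInf_mem (s := {d | DCond l F d})
    ⟨2 * n + 2, Or.inl ⟨⟨n + 1, by ring⟩, 1, mem_Icc.mpr ⟨le_rfl, by omega⟩, fun h => by
      have := mem_Icc.mp (hF _ h (mem_insert_of_mem (mem_singleton_self _)))
      omega⟩⟩

theorem two_mul_card_layer_two_le_of_dCond {n l c d e : ℕ} {F : Finset (Finset ℕ)}
    (hF : IsShifted n F) (hn : n = 2 * l + 3 * c) (hl : 0 < l) (hdc : d ≤ 2 * c)
    (he : (d + 1) / 2 = e) (hd : DCond l F d) :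
    2 * (#(layer n F 2) : ℤ) ≤ (2 * l + d - 1) * (2 * l + d - 2) ∨
      2 * (#(layer n F 2) : ℤ) ≤ layerBound l c e (l + e) := by
  rcases hd with ⟨⟨k, rfl⟩, i, hi, hi'⟩ | ⟨⟨k, rfl⟩, h1 | ⟨i, hi, hi'⟩⟩
  · obtain rfl : k = e := by omega
    rw [mem_Icc] at hi
    rw [show 2 * l + (k + k) + 1 - i = 2 * l + 2 * k + 1 - i by omega] at hi'
    have := (hF.two_mul_card_layer_two_le_layerBound hn (by omega) hi.1 (by omega) hi').trans
      (layerBound_le_max (lo := 1) (by exact_mod_cast hi.1) (by norm_cast; omega))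
    rcases le_max_iff.mp this with h | h
    · left
      unfold layerBound at h
      push_cast
      linarith
    · exact Or.inr h
  · left
    have := hF.two_mul_card_layer_two_le le_rfl (by omega) (by omega) h1
    push_cast at this ⊢
    linarith
  · obtain rfl : k + 1 = e := by omega
    rw [mem_Icc] at hi
    rw [show 2 * l + (2 * k + 1) + 2 - i = 2 * l + 2 * (k + 1) + 1 - i by omega] at hi'
    have := (hF.two_mul_card_layer_two_le_layerBound hn (by omega) (by omega) (by omega)
      hi').trans (layerBound_le_max (lo := 3) (by exact_mod_cast hi.1) (by norm_cast; omega))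
    rcases le_max_iff.mp this with h | h
    · rcases layerBound_three_le (l := l) (c := c) (e := (k + 1 : ℕ)) (by norm_cast; omega)
        with h3 | h3
      · left
        push_cast at h h3 ⊢
        linarith
      · exact Or.inr (h.trans h3)
    · exact Or.inr h

theorem stmt_10_general (n l c d : ℕ) (hl0 : 0 < l)
    (hn : n = 2 * l + 3 * c)
    (F : Finset (Finset ℕ)) (hF : ∀ A ∈ F, A ⊆ ground n) (hsh : IsShifted n F)
    (hup : IsUpSet n F) (h1 : ∀ A ∈ F, A.card ≠ 1)
    (hdF : dF l F = d) (hd2c : d ≤ 2 * c) :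
    2 * ((((ground n).powerset \ famP' n l).card : ℤ)
          - ((yF n F 0 + yF n F 1 + yF n F 2 : ℕ) : ℤ))
        ≤ (4 * (l : ℤ) + (d : ℤ) - 3) * (d : ℤ) ∨
    2 * ((((ground n).powerset \ famP n l).card : ℤ)
          - ((yF n F 0 + yF n F 1 + yF n F 2 : ℕ) : ℤ))
        ≤ (2 * (l : ℤ) + 6 * (c : ℤ) - ((d : ℤ) + 1) / 2 + 1) * (((d : ℤ) + 1) / 2) := by
  rw [card_powerset_sdiff fun _ => mem_famP'_of_three_le,
    card_powerset_sdiff fun _ => mem_famP_of_three_le,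
    yF_zero_add_yF_one fun _ => two_le_card_of_mem_famP',
    yF_zero_add_yF_one fun _ => two_le_card_of_mem_famP,
    yF_zero_add_yF_one fun _ => hup.two_le_card h1 (by omega),
    yF_famP_two hl0]
  have hP' := yF_famP'_two_add_choose (n := n) (l := l) (by omega)
  have hF₂ := yF_add_card_layer n F 2
  have hcP' := two_mul_natCast_choose_two (2 * l - 1)
  have hcn := two_mul_natCast_choose_two n
  have hcP := two_mul_natCast_choose_two (n + 1 - l)
  zify [show 1 ≤ 2 * l by omega, show l ≤ n + 1 by omega] at hP' hF₂ hcP' hcP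
  obtain ⟨e, he⟩ : ∃ e, (d + 1) / 2 = e := ⟨_, rfl⟩
  rw [show ((d : ℤ) + 1) / 2 = e by omega]
  rcases two_mul_card_layer_two_le_of_dCond hsh hn hl0 hd2c he (hdF ▸ dCond_dF hF) with hL | hL
  · left
    push_cast
    linarith
  · right
    unfold layerBound at hL
    subst hn
    push_cast at hcn hcP ⊢
    linarith

theorem stmt_10 (n s l c d : ℕ) (hs0 : 0 < s) (hl0 : 0 < l) (hc0 : 0 < c)
    (hcl : c + l = s) (hn : n = 2 * l + 3 * c)
    (F : Finset (Finset ℕ)) (hF : ∀ A ∈ F, A ⊆ ground n) (hsh : IsShifted n F)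
    (hup : IsUpSet n F) (h1 : ∀ A ∈ F, A.card ≠ 1)
    (hdF : dF l F = d) (hd2c : d ≤ 2 * c) :
    2 * ((((ground n).powerset \ famP' n l).card : ℤ)
          - ((yF n F 0 + yF n F 1 + yF n F 2 : ℕ) : ℤ))
        ≤ (4 * (l : ℤ) + (d : ℤ) - 3) * (d : ℤ) ∨
    2 * ((((ground n).powerset \ famP n l).card : ℤ)
          - ((yF n F 0 + yF n F 1 + yF n F 2 : ℕ) : ℤ))
        ≤ (2 * (l : ℤ) + 6 * (c : ℤ) - ((d : ℤ) + 1) / 2 + 1) * (((d : ℤ) + 1) / 2) :=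
  stmt_10_general n l c d hl0 hn F hF hsh hup h1 hdF hd2c
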